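/- arXiv:1808.04304 — 11 statements merged into one kernel-verified Lean document; each statement's English description precedes it below -/
import Mathlib

section
/- If the base-3/2 digit string of a natural number n is defined recursively by digits(0) = [] and digits(n) = digits(2·⌊n/3⌋) ++ [n mod 3] for n > 0, and the value of a digit list L is val(L) = foldl (fun acc d => (3/2)·acc + d) 0 L computed in ℚ, then for every natural number n, val(digits(n)) = n. -/
set_option maxRecDepth 4000


def digits : ℕ → List ℕ
  | 0 => []
  | n + 1 => digits (2 * ((n + 1) / 3)) ++ [(n + 1) % 3]
decreasing_by omega

def val (L : List ℕ) : ℚ := L.foldl (fun acc d => 3/2 * acc + d) 0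

lemma val_concat (L : List ℕ) (d : ℕ) : val (L ++ [d]) = 3/2 * val L + d := by
  simp [val, List.foldl_append]

theorem val_digits (n : ℕ) : val (digits n) = n := by
  induction n using Nat.strong_induction_on with
  | _ n ih =>
    match n with
    | 0 => simp [digits, val]
    | m + 1 =>
      rw [digits, val_concat, ih (2 * ((m + 1) / 3)) (by omega)]
      have h3 : (m + 1) % 3 + 3 * ((m + 1) / 3) = m + 1 := Nat.mod_add_div (m + 1) 3
      conv_rhs => rw [← h3]
      push_cast
      ring
end

section
/- For every positive natural number n and every k, the base-3/2 representation of n ends with at least k zeros (i.e., the last k entries of digits(n) all equal 0 and digits(n) has length ≥ k) if and only if 3^k divides n. -/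
lemma digits_eq (n : ℕ) (hn : 0 < n) :
    digits n = digits (2 * (n / 3)) ++ [n % 3] := by
  match n, hn with
  | n + 1, _ => rw [digits]

theorem trailing_zeros_iff (n k : ℕ) (hn : 0 < n) :
    (k ≤ (digits n).length ∧
      List.drop ((digits n).length - k) (digits n) = List.replicate k 0) ↔
    3 ^ k ∣ n := by
  induction k generalizing n with
  | zero => simp
  | succ k ih =>
    rw [digits_eq n hn]
    set L := digits (2 * (n / 3)) with hL
    have hlen : (L ++ [n % 3]).length = L.length + 1 := by simp
    by_cases h3 : n % 3 = 0
    · have hn3 : 0 < n / 3 := Nat.div_pos (by omega) (by norm_num)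
      have hpos : 0 < 2 * (n / 3) := by omega
      have IH := ih (2 * (n / 3)) hpos
      rw [← hL] at IH
      have harith : 3 ^ k ∣ 2 * (n / 3) ↔ 3 ^ (k + 1) ∣ n := by
        have hco : Nat.Coprime (3 ^ k) 2 := Nat.Coprime.pow_left _ (by norm_num)
        have h1 : 3 ^ k ∣ 2 * (n / 3) ↔ 3 ^ k ∣ n / 3 := by
          rw [mul_comm]; exact hco.dvd_mul_right
        have h2 : 3 ^ k ∣ n / 3 ↔ 3 * 3 ^ k ∣ n :=
          Nat.dvd_div_iff_mul_dvd (by omega)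
        rw [h1, h2, pow_succ, mul_comm]
      rw [← harith, ← IH]
      constructor
      · rintro ⟨hk, hdrop⟩
        have hk' : k ≤ L.length := by omega
        rw [hlen, List.drop_append_of_le_length (by omega), h3,
          show L.length + 1 - (k + 1) = L.length - k from by omega,
          List.replicate_succ' ] at hdrop
        exact ⟨hk', (List.append_inj' hdrop rfl).1⟩
      · rintro ⟨hk, hdrop⟩
        refine ⟨by omega, ?_⟩
        rw [hlen, List.drop_append_of_le_length (by omega), h3,
          show L.length + 1 - (k + 1) = L.length - k from by omega,
          List.replicate_succ', hdrop]
    · constructor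
      · rintro ⟨hk, hdrop⟩
        rw [hlen] at hk
        rw [hlen, List.drop_append_of_le_length (by omega),
          show L.length + 1 - (k + 1) = L.length - k from by omega,
          List.replicate_succ'] at hdrop
        have := (List.append_inj' hdrop rfl).2
        simp at this
        omega
      · intro hdvd
        exfalso
        have : 3 ∣ n := dvd_trans (dvd_pow_self 3 (Nat.succ_ne_zero k)) hdvd
        omega
end

section
/- For every natural number n, n is congruent modulo 5 to the alternating sum of its base-3/2 digits read from right to left: n ≡ Σ_{i=0}^{m-1} (−1)^i · d_i (mod 5), where digits(n) reversed is [d_0, d_1, …, d_{m−1}]. -/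
private def S (L : List ℕ) : ℤ :=
  ∑ i ∈ Finset.range L.length, (-1 : ℤ) ^ i * ((L.reverse.getD i 0 : ℕ) : ℤ)

private lemma S_append (L : List ℕ) (d : ℕ) : S (L ++ [d]) = (d : ℤ) - S L := by
  unfold S
  have hrev : (L ++ [d]).reverse = d :: L.reverse := by simp
  have hlen : (L ++ [d]).length = L.length + 1 := by simp
  rw [hrev, hlen, Finset.sum_range_succ']
  simp only [List.getD_cons_succ, List.getD_cons_zero, pow_succ, pow_zero, one_mul]
  rw [Finset.sum_congr rfl (fun i _ => by ring : ∀ i ∈ Finset.range L.length,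
    (-1:ℤ)^i * (-1) * ((L.reverse.getD i 0 : ℕ) : ℤ) = -((-1:ℤ)^i * ((L.reverse.getD i 0 : ℕ) : ℤ)))]
  rw [Finset.sum_neg_distrib]
  ring

private lemma key (n : ℕ) : (n : ℤ) ≡ S (digits n) [ZMOD 5] := by
  induction n using Nat.strong_induction_on with
  | _ n ih =>
    match n with
    | 0 => simp [digits, S]
    | m + 1 =>
      rw [show digits (m+1) = digits (2 * ((m+1)/3)) ++ [(m+1)%3] from by rw [digits]]
      rw [S_append]
      have h := ih (2 * ((m+1)/3)) (by omega)
      have : ((m+1 : ℕ) : ℤ) ≡ ((m+1)%3 : ℕ) - (2 * ((m+1)/3) : ℕ) [ZMOD 5] := by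
        have hc : ((m+1 : ℕ) : ℤ) = ((m+1)%3 : ℕ) - (2 * ((m+1)/3) : ℕ) + 5 * ((m+1)/3 : ℕ) := by
          push_cast
          omega
        rw [hc]
        have : (5 : ℤ) * ((m+1)/3 : ℕ) ≡ 0 [ZMOD 5] := (Int.modEq_iff_dvd.mpr ⟨-((m+1)/3 : ℕ), by ring⟩)
        calc _ ≡ (((m+1)%3 : ℕ) : ℤ) - (2 * ((m+1)/3) : ℕ) + 0 [ZMOD 5] := Int.ModEq.add rfl this
          _ = _ := by ring
      exact this.trans (Int.ModEq.sub rfl h)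

theorem mod_five_alternating (n : ℕ) :
    (n : ℤ) ≡ ∑ i ∈ Finset.range (digits n).length,
      (-1 : ℤ) ^ i * (((digits n).reverse.getD i 0 : ℕ) : ℤ) [ZMOD 5] := by
  exact key n
end

section
/- For every natural number n, digits(3^n) = digits(2^n) ++ List.replicate n 0; that is, 3^n written in base 3/2 is 2^n written in base 3/2 followed by n zeros. -/
lemma digits_three_mul (k : ℕ) (hk : 0 < k) : digits (3 * k) = digits (2 * k) ++ [0] := by
  obtain ⟨m, hm⟩ : ∃ m, 3 * k = m + 1 := ⟨3 * k - 1, by omega⟩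
  rw [hm, digits]
  have h1 : (m + 1) / 3 = k := by omega
  have h2 : (m + 1) % 3 = 0 := by omega
  rw [h1, h2]

lemma key_s7 (n k : ℕ) : digits (2 ^ k * 3 ^ n) = digits (2 ^ (k + n)) ++ List.replicate n 0 := by
  induction n generalizing k with
  | zero => simp
  | succ n ih =>
    have h : 2 ^ k * 3 ^ (n + 1) = 3 * (2 ^ k * 3 ^ n) := by ring
    rw [h, digits_three_mul _ (by positivity)]
    have h2 : 2 * (2 ^ k * 3 ^ n) = 2 ^ (k + 1) * 3 ^ n := by ring
    rw [h2, ih]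
    have : k + 1 + n = k + (n + 1) := by omega
    rw [this]; simp [List.replicate_succ']

theorem digits_pow_three (n : ℕ) :
    digits (3 ^ n) = digits (2 ^ n) ++ List.replicate n 0 := by
  simpa using key_s7 n 0
end

section
/- For every natural number n ≥ 2, the first (leftmost) digit of the base-3/2 representation of n equals 2, i.e., (digits n).head? = some 2. -/
theorem head_eq_two (n : ℕ) (hn : 2 ≤ n) : (digits n).head? = some 2 := by
  induction n using Nat.strong_induction_on with
  | _ n ih =>
    match n, hn with
    | 2, _ => simp [digits]
    | (m+3), _ =>
      rw [show m + 3 = (m + 2) + 1 by rfl, digits]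
      have h2 : 2 ≤ 2 * ((m + 2 + 1) / 3) := by omega
      have hlt : 2 * ((m + 2 + 1) / 3) < m + 3 := by omega
      have hih := ih _ hlt h2
      cases hd : digits (2 * ((m + 2 + 1) / 3)) with
      | nil => rw [hd] at hih; simp at hih
      | cons a l => rw [hd] at hih; simpa using hih
end

section
/- For every natural number n ≥ 6, the base-3/2 representation of n begins with the two digits 2, 1; i.e., List.take 2 (digits n) = [2, 1]. -/
theorem take_two_eq (n : ℕ) (hn : 6 ≤ n) : List.take 2 (digits n) = [2, 1] := by
  induction n using Nat.strong_induction_on with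
  | _ n ih =>
    by_cases h9 : n ≤ 8
    · interval_cases n <;> simp [digits]
    · have h3 : 6 ≤ 2 * (n / 3) := by omega
      have hlt : 2 * (n / 3) < n := by omega
      have hih := ih _ hlt h3
      obtain ⟨m, rfl⟩ : ∃ m, n = m + 1 := ⟨n - 1, by omega⟩
      rw [digits]
      rcases hd : digits (2 * ((m + 1) / 3)) with _ | ⟨a, _ | ⟨b, t⟩⟩ <;>
        rw [hd] at hih <;> simp_all
end

section
/- If a natural number n has a base-3/2 representation of length at least 2 in which all digits are equal, then n = 5 (whose representation is [2,2]). -/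
lemma digits_ne_nil {n : ℕ} (h : n ≠ 0) : digits n ≠ [] := by
  cases n with
  | zero => simp at h
  | succ m => rw [digits]; simp

lemma digits_key : ∀ n : ℕ, ∀ k d : ℕ, 2 ≤ k → digits n = List.replicate k d → n = 5 := by
  intro n
  induction n using Nat.strong_induction_on with
  | _ n ih =>
    intro k d hk h
    match n with
    | 0 =>
      rw [digits] at h
      have := congrArg List.length h
      simp at this; omega
    | n+1 =>
      rw [digits] at h
      have hk1 : k = (k-1) + 1 := by omega
      rw [hk1, List.replicate_succ'] at h
      have hinj := List.append_inj' h (by simp)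
      obtain ⟨h1, h2⟩ := hinj
      have hd : (n+1) % 3 = d := by simpa using h2
      set m := 2 * ((n+1)/3) with hm
      have hmlt : m < n + 1 := by omega
      rcases Nat.lt_or_ge (k-1) 2 with hsmall | hbig
      · -- k - 1 = 1
        have hk2 : k - 1 = 1 := by omega
        rw [hk2] at h1
        simp [List.replicate] at h1
        -- digits m = [d]
        have hm0 : m ≠ 0 := by
          intro h0; rw [h0] at h1; simp [digits] at h1
        match hmm : m with
        | 0 => exact absurd rfl hm0
        | m'+1 =>
          rw [digits] at h1
          have hlen1 := congrArg List.length h1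
          simp at hlen1
          have hnil : digits (2 * ((m'+1)/3)) = [] := hlen1
          rw [hnil] at h1
          simp at h1
          have h20 : 2 * ((m'+1)/3) = 0 := by
            by_contra hne
            exact digits_ne_nil hne hnil
          -- m' + 1 < 3, and m = m'+1 is even
          have : m' + 1 = 2 := by omega
          have hd2 : d = 2 := by omega
          omega
      · have hm5 : m = 5 := ih m hmlt (k-1) d hbig h1
        omega

theorem repdigit_eq_five (n : ℕ) (hlen : 2 ≤ (digits n).length)
    (h : ∃ d, digits n = List.replicate (digits n).length d) : n = 5 := by
  obtain ⟨d, hd⟩ := h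
  exact digits_key n _ d hlen hd
end

section
/- If the base-3/2 representation of a natural number n begins with the three digits 2, 1, 1, then n = 7; i.e., List.take 3 (digits n) = [2, 1, 1] implies n = 7. -/
lemma digits_eq_nil {n : ℕ} (h : digits n = []) : n = 0 := by
  cases n with
  | zero => rfl
  | succ k => rw [digits] at h; simp at h

lemma digits_eq_two {n : ℕ} (h : digits n = [2]) : n = 2 := by
  cases n with
  | zero => simp [digits] at h
  | succ k =>
    rw [digits] at h
    rw [show ([2] : List ℕ) = [] ++ [2] from rfl] at h
    have h2 : digits (2 * ((k + 1) / 3)) = [] ∧ (k + 1) % 3 = 2 := by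
      rcases List.append_inj' h rfl with ⟨h1, h2⟩
      exact ⟨h1, by simpa using h2⟩
    have := digits_eq_nil h2.1
    omega

lemma digits_eq_two_one {n : ℕ} (h : digits n = [2, 1]) : n = 4 := by
  cases n with
  | zero => simp [digits] at h
  | succ k =>
    rw [digits] at h
    rw [show ([2, 1] : List ℕ) = [2] ++ [1] from rfl] at h
    have h2 : digits (2 * ((k + 1) / 3)) = [2] ∧ (k + 1) % 3 = 1 := by
      rcases List.append_inj' h rfl with ⟨h1, h2⟩
      exact ⟨h1, by simpa using h2⟩
    have := digits_eq_two h2.1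
    omega

theorem starts_211_eq_seven (n : ℕ) (h : List.take 3 (digits n) = [2, 1, 1]) :
    n = 7 := by
  induction n using Nat.strong_induction_on with
  | _ n ih =>
    cases n with
    | zero => simp [digits] at h
    | succ k =>
      rw [digits] at h
      set m := 2 * ((k + 1) / 3) with hm
      by_cases hl : 3 ≤ (digits m).length
      · rw [List.take_append_of_le_length hl] at h
        have hmlt : m < k + 1 := by omega
        have := ih m hmlt h
        omega
      · push_neg at hl
        have hle : (digits m ++ [(k + 1) % 3]).length ≤ 3 := by
          simp; omega
        rw [List.take_of_length_le hle] at h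
        rw [show ([2, 1, 1] : List ℕ) = [2, 1] ++ [1] from rfl] at h
        have h2 : digits m = [2, 1] ∧ (k + 1) % 3 = 1 := by
          rcases List.append_inj' h rfl with ⟨h1, h2⟩
          exact ⟨h1, by simpa using h2⟩
        have := digits_eq_two_one h2.1
        omega
end

section
/- For a positive natural number n, the base-3/2 representation of n + 1 has more digits than that of n (equivalently, n is the largest integer with its number of base-3/2 digits) if and only if digits(n) contains no digit 0 and its last digit is 2. -/
lemma digits_pos (n : ℕ) (h : 0 < n) :
    digits n = digits (2 * (n / 3)) ++ [n % 3] := by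
  cases n with
  | zero => omega
  | succ k => rw [digits]

lemma key_s12 : ∀ m : ℕ, ((digits (m+2)).length > (digits m).length ↔ 0 ∉ digits m) := by
  intro m
  induction m using Nat.strong_induction_on with
  | _ m ih =>
    rcases Nat.lt_or_ge m 1 with h | h
    · interval_cases m
      simp [digits]
    · have hm3 : m % 3 = 0 ∨ m % 3 = 1 ∨ m % 3 = 2 := by omega
      rw [digits_pos m (by omega), digits_pos (m+2) (by omega)]
      rcases hm3 with h0 | h1 | h2
      · have e1 : (m+2)/3 = m/3 := by omega
        have e2 : (m+2)%3 = 2 := by omega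
        rw [e1, e2, h0]
        simp
      · have e1 : 2*((m+2)/3) = 2*(m/3)+2 := by omega
        have e2 : (m+2)%3 = 0 := by omega
        rw [e1, e2, h1]
        have H := ih (2*(m/3)) (by omega)
        simp only [List.length_append, List.length_singleton, List.mem_append,
          List.mem_singleton, gt_iff_lt, Nat.add_lt_add_iff_right] at H ⊢
        simpa using H
      · have e1 : 2*((m+2)/3) = 2*(m/3)+2 := by omega
        have e2 : (m+2)%3 = 1 := by omega
        rw [e1, e2, h2]
        have H := ih (2*(m/3)) (by omega)
        simp only [List.length_append, List.length_singleton, List.mem_append,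
          List.mem_singleton, gt_iff_lt, Nat.add_lt_add_iff_right] at H ⊢
        simpa using H

theorem largest_iff (n : ℕ) (hn : 0 < n) :
    (digits (n + 1)).length > (digits n).length ↔
      (0 ∉ digits n ∧ (digits n).getLast? = some 2) := by
  rw [digits_pos n hn, digits_pos (n+1) (by omega)]
  have hm3 : n % 3 = 0 ∨ n % 3 = 1 ∨ n % 3 = 2 := by omega
  rcases hm3 with h | h | h
  · have e1 : (n+1)/3 = n/3 := by omega
    have e2 : (n+1)%3 = 1 := by omega
    rw [e1, e2, h]
    simp
  · have e1 : (n+1)/3 = n/3 := by omega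
    have e2 : (n+1)%3 = 2 := by omega
    rw [e1, e2, h]
    simp
  · have e1 : 2*((n+1)/3) = 2*(n/3)+2 := by omega
    have e2 : (n+1)%3 = 0 := by omega
    rw [e1, e2, h]
    have H := key_s12 (2*(n/3))
    simp only [List.length_append, List.length_singleton, List.mem_append,
      List.mem_singleton, gt_iff_lt, Nat.add_lt_add_iff_right,
      List.getLast?_append, List.getLast?_singleton] at H ⊢
    simpa using H
end

section
/- Define a : ℕ → ℕ by a(1) = 1 and a(n+1) = 3·a(n)/2 if a(n) is even, and a(n+1) = 3·(a(n)+1)/2 if a(n) is odd (i.e., a(n+1) = 3·⌈a(n)/2⌉). Then for all m ≥ 1 and k ≥ 1, the base-3/2 representation of m has exactly k digits if and only if a(k) ≤ m < a(k+1). -/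
def A070885 : ℕ → ℕ
  | 0 => 0
  | 1 => 1
  | n + 2 =>
      if Even (A070885 (n + 1)) then 3 * A070885 (n + 1) / 2
      else 3 * (A070885 (n + 1) + 1) / 2

lemma A_succ (k : ℕ) (hk : 1 ≤ k) :
    A070885 (k + 1) = 3 * ((A070885 k + 1) / 2) := by
  obtain ⟨n, rfl⟩ : ∃ n, k = n + 1 := ⟨k - 1, by omega⟩
  show A070885 (n + 2) = _
  rw [A070885]
  by_cases h : Even (A070885 (n + 1))
  · rw [if_pos h]; rw [Nat.even_iff] at h; omega
  · rw [if_neg h]; rw [Nat.even_iff] at h; omega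

lemma A_pos (k : ℕ) (hk : 1 ≤ k) : 1 ≤ A070885 k := by
  induction k with
  | zero => omega
  | succ n ih =>
    rcases Nat.eq_or_lt_of_le hk with h | h
    · simp [← h, A070885]
    · have h1 : 1 ≤ n := by omega
      have := ih h1
      rw [A_succ n h1]
      omega

lemma digits_len (m : ℕ) (hm : 1 ≤ m) :
    (digits m).length = (digits (2 * (m / 3))).length + 1 := by
  obtain ⟨n, rfl⟩ : ∃ n, m = n + 1 := ⟨m - 1, by omega⟩
  rw [digits]
  simp

lemma len_eq : ∀ k, 1 ≤ k → ∀ m, A070885 k ≤ m → m < A070885 (k + 1) →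
    (digits m).length = k := by
  intro k
  induction k with
  | zero => omega
  | succ n ih =>
    intro _ m h1 h2
    rcases Nat.eq_zero_or_pos n with rfl | hn
    · -- k = 1 : A 1 = 1, A 2 = 3
      norm_num at h1 h2
      have hA1 : A070885 1 = 1 := rfl
      have hA2 : A070885 2 = 3 * ((A070885 1 + 1) / 2) := A_succ 1 le_rfl
      have hm3 : m < 3 := by omega
      have hm1 : 1 ≤ m := by omega
      rw [digits_len m hm1]
      have : 2 * (m / 3) = 0 := by omega
      rw [this]
      simp [digits]
    · -- inductive step
      have hs1 := A_succ n hn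
      have hs2 := A_succ (n + 1) (by omega)
      have hp := A_pos n hn
      have hm1 : 1 ≤ m := by omega
      rw [digits_len m hm1]
      rw [ih hn (2 * (m / 3)) (by omega) (by omega)]

lemma cover : ∀ k m, 1 ≤ m → m < A070885 (k + 1) →
    ∃ j, 1 ≤ j ∧ A070885 j ≤ m ∧ m < A070885 (j + 1) := by
  intro k
  induction k with
  | zero => intro m hm h; simp [show A070885 1 = 1 from rfl] at h; omega
  | succ n ih =>
    intro m hm h
    by_cases hc : A070885 (n + 1) ≤ m
    · exact ⟨n + 1, by omega, hc, h⟩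
    · exact ih m hm (by omega)

lemma A_ge (k : ℕ) (hk : 1 ≤ k) : k ≤ A070885 k := by
  induction k with
  | zero => omega
  | succ n ih =>
    rcases Nat.eq_zero_or_pos n with rfl | hn
    · simp [show A070885 1 = 1 from rfl]
    · have := ih hn
      have := A_succ n hn
      have := A_pos n hn
      omega

theorem length_eq_iff (m k : ℕ) (hm : 1 ≤ m) (hk : 1 ≤ k) :
    (digits m).length = k ↔ A070885 k ≤ m ∧ m < A070885 (k + 1) := by
  constructor
  · intro h
    have hlt : m < A070885 (m + 1) := by
      have := A_ge (m + 1) (by omega); omega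
    obtain ⟨j, hj1, hj2, hj3⟩ := cover m m hm hlt
    have hlen := len_eq j hj1 m hj2 hj3
    have : j = k := by omega
    subst this
    exact ⟨hj2, hj3⟩
  · intro ⟨h1, h2⟩
    exact len_eq k hk m h1 h2
end

section
/- Let a : ℕ → ℕ satisfy a(0) = 0 and a(3n + k) = ⌊(3·a(n) + k)/2⌋ for all n ≥ 0 and k ∈ {0,1,2} with 3n+k > 0. Define b(n) = a(3^n − 1). Then b(0) = 0 and b(n) = ⌊(3·b(n−1) + 2)/2⌋ for all n ≥ 1; consequently, c(n) := 2·b(n) satisfies c(n) = 2·⌊3·c(n−1)/4⌋ + 2. -/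
theorem A006999_rec (a : ℕ → ℕ) (h0 : a 0 = 0)
    (hrec : ∀ n k : ℕ, k ≤ 2 → 0 < 3 * n + k → a (3 * n + k) = (3 * a n + k) / 2) :
    a (3 ^ 0 - 1) = 0 ∧
    ∀ n : ℕ, 1 ≤ n →
      a (3 ^ n - 1) = (3 * a (3 ^ (n - 1) - 1) + 2) / 2 ∧
      2 * a (3 ^ n - 1) = 2 * (3 * (2 * a (3 ^ (n - 1) - 1)) / 4) + 2 := by
  refine ⟨by simpa using h0, fun n hn => ?_⟩
  have hp : (1:ℕ) ≤ 3 ^ (n - 1) := Nat.one_le_pow _ _ (by norm_num)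
  have key : 3 ^ n - 1 = 3 * (3 ^ (n - 1) - 1) + 2 := by
    have : 3 ^ n = 3 * 3 ^ (n - 1) := by
      rw [← pow_succ']
      congr 1
      omega
    omega
  have h1 : a (3 ^ n - 1) = (3 * a (3 ^ (n - 1) - 1) + 2) / 2 := by
    rw [key]
    exact hrec _ 2 le_rfl (by omega)
  refine ⟨h1, ?_⟩
  rw [h1]
  omega
end
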